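/- Let x₁,…,xₙ be real numbers, G₁,…,Gₙ be independent standard Gumbel random variables (distribution function F(g) = exp(−exp(−g))), and kᵢ = xᵢ + Gᵢ. Then P(argmaxᵢ kᵢ = j) = exp(xⱼ) / ∑ᵢ exp(xᵢ) for each j. -/

import Mathlib

open MeasureTheory ProbabilityTheory
open scoped MeasureTheory ProbabilityTheory

/-! With a Gumbel law of location `μ` described by its weight `w = exp μ` (CDF
`exp (-(w * exp (-t)))`), `x + G` has weight `exp x * w`, and the maximum of independent Gumbel
variables has the summed weight, since their CDFs multiply. So, given `x j + G j = t`, all other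
`x i + G i` lie below `t` with probability `exp (-(A * exp (-t)))`, where
`A = ∑ i ≠ j, exp (x i)`. Integrating against the Gumbel density of weight `w = exp (x j)` gives
`w / (w + A)`, because `w e⁻ᵗ exp (-(w + A) e⁻ᵗ)` is `w / (w + A)` times the density of weight
`w + A`. -/

open Real Set Filter Topology

theorem integrableOn_Iic_deriv_of_nonneg {g g' : ℝ → ℝ} {a l : ℝ}
    (hderiv : ∀ x, HasDerivAt g (g' x) x) (hcont : Continuous g') (hnonneg : ∀ x, 0 ≤ g' x)
    (hbot : Tendsto g atBot (𝓝 l)) : IntegrableOn g' (Iic a) := by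
  refine integrableOn_Iic_of_intervalIntegral_norm_tendsto (g a - l) a
    (fun _ => hcont.integrableOn_Ioc) tendsto_id ?_
  have hint : ∀ b, ∫ x in b..a, ‖g' x‖ = g a - g b := fun b => by
    simp_rw [Real.norm_of_nonneg (hnonneg _)]
    exact intervalIntegral.integral_eq_sub_of_hasDerivAt (fun x _ => hderiv x)
      (hcont.intervalIntegrable _ _)
  simpa only [hint, id] using hbot.const_sub (g a)

namespace ProbabilityTheory

noncomputable section

/-- The CDF of the Gumbel law with location `log w`. -/
def gumbelCDFReal (w t : ℝ) : ℝ := exp (-(w * exp (-t)))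

def gumbelPDFReal (w t : ℝ) : ℝ := w * exp (-t) * gumbelCDFReal w t

def gumbelMeasure (w : ℝ) : Measure ℝ :=
  volume.withDensity fun t => ENNReal.ofReal (gumbelPDFReal w t)

end

variable {w v : ℝ}

lemma gumbelCDFReal_mul_gumbelCDFReal (w v t : ℝ) :
    gumbelCDFReal w t * gumbelCDFReal v t = gumbelCDFReal (w + v) t := by
  simp only [gumbelCDFReal, ← exp_add]
  ring_nf

lemma prod_gumbelCDFReal {ι : Type*} (s : Finset ι) (w : ι → ℝ) (t : ℝ) :
    ∏ i ∈ s, gumbelCDFReal (w i) t = gumbelCDFReal (∑ i ∈ s, w i) t := by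
  simp only [gumbelCDFReal, ← exp_sum, Finset.sum_mul, Finset.sum_neg_distrib]

lemma gumbelCDFReal_nonneg (w t : ℝ) : 0 ≤ gumbelCDFReal w t := (exp_pos _).le

lemma gumbelPDFReal_nonneg (hw : 0 ≤ w) (t : ℝ) : 0 ≤ gumbelPDFReal w t := by
  unfold gumbelPDFReal gumbelCDFReal
  positivity

@[fun_prop]
lemma continuous_gumbelCDFReal (w : ℝ) : Continuous (gumbelCDFReal w) := by
  unfold gumbelCDFReal
  fun_prop

@[fun_prop]
lemma continuous_gumbelPDFReal (w : ℝ) : Continuous (gumbelPDFReal w) := by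
  unfold gumbelPDFReal
  fun_prop

lemma hasDerivAt_gumbelCDFReal (w t : ℝ) :
    HasDerivAt (gumbelCDFReal w) (gumbelPDFReal w t) t := by
  have hinner : HasDerivAt (fun t => -(w * exp (-t))) (w * exp (-t)) t := by
    simpa using (((hasDerivAt_neg t).exp).const_mul w).fun_neg
  exact hinner.exp.congr_deriv (by rw [gumbelPDFReal, gumbelCDFReal, mul_comm])

lemma tendsto_gumbelCDFReal_atBot (hw : 0 < w) : Tendsto (gumbelCDFReal w) atBot (𝓝 0) :=
  tendsto_exp_atBot.comp <| tendsto_neg_atTop_atBot.comp <|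
    (tendsto_exp_atTop.comp tendsto_neg_atBot_atTop).const_mul_atTop hw

lemma tendsto_gumbelCDFReal_atTop (w : ℝ) : Tendsto (gumbelCDFReal w) atTop (𝓝 1) := by
  unfold gumbelCDFReal
  have h : Tendsto (fun t => -(w * exp (-t))) atTop (𝓝 (-(w * 0))) :=
    ((tendsto_exp_atBot.comp tendsto_neg_atTop_atBot).const_mul w).neg
  simpa [Function.comp_def] using (continuous_exp.tendsto _).comp h

lemma gumbelMeasure_Iic (hw : 0 < w) (a : ℝ) :
    gumbelMeasure w (Iic a) = ENNReal.ofReal (gumbelCDFReal w a) := by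
  have hint : IntegrableOn (gumbelPDFReal w) (Iic a) :=
    integrableOn_Iic_deriv_of_nonneg (hasDerivAt_gumbelCDFReal w) (continuous_gumbelPDFReal w)
      (gumbelPDFReal_nonneg hw.le) (tendsto_gumbelCDFReal_atBot hw)
  rw [gumbelMeasure, withDensity_apply _ measurableSet_Iic,
    ← ofReal_integral_eq_lintegral_ofReal hint (ae_of_all _ (gumbelPDFReal_nonneg hw.le)),
    integral_Iic_of_hasDerivAt_of_tendsto' (fun t _ => hasDerivAt_gumbelCDFReal w t) hint
      (tendsto_gumbelCDFReal_atBot hw), sub_zero]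

lemma isProbabilityMeasure_gumbelMeasure (hw : 0 < w) :
    IsProbabilityMeasure (gumbelMeasure w) := by
  refine ⟨tendsto_nhds_unique (tendsto_measure_Iic_atTop _) ?_⟩
  simp_rw [gumbelMeasure_Iic hw]
  simpa [Function.comp_def] using
    (ENNReal.continuous_ofReal.tendsto _).comp (tendsto_gumbelCDFReal_atTop w)

lemma gumbelMeasure_Iio (hw : 0 < w) (a : ℝ) :
    gumbelMeasure w (Iio a) = ENNReal.ofReal (gumbelCDFReal w a) := by
  rw [measure_congr (Iio_ae_eq_Iic' ?_), gumbelMeasure_Iic hw]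
  exact withDensity_absolutelyContinuous _ _ volume_singleton

lemma map_eq_gumbelMeasure {Ω : Type*} [MeasurableSpace Ω] {μ : Measure Ω} {X : Ω → ℝ}
    (hX : Measurable X) (hw : 0 < w)
    (hcdf : ∀ t, μ {ω | X ω ≤ t} = ENNReal.ofReal (gumbelCDFReal w t)) :
    μ.map X = gumbelMeasure w := by
  have := isProbabilityMeasure_gumbelMeasure hw
  refine (Measure.ext_of_Iic _ _ fun a => ?_).symm
  rw [gumbelMeasure_Iic hw, Measure.map_apply hX measurableSet_Iic, ← hcdf]
  rfl

lemma map_const_add_gumbelMeasure (hw : 0 < w) (x : ℝ) :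
    (gumbelMeasure w).map (x + ·) = gumbelMeasure (exp x * w) := by
  refine map_eq_gumbelMeasure (measurable_const_add x) (by positivity) fun a => ?_
  have hset : {t | x + t ≤ a} = Iic (a - x) := by ext; simp [le_sub_iff_add_le']
  rw [hset, gumbelMeasure_Iic hw]
  unfold gumbelCDFReal
  rw [neg_sub, exp_sub, exp_neg a]
  ring_nf

lemma lintegral_gumbelCDFReal (hw : 0 < w) (hv : 0 ≤ v) :
    ∫⁻ t, ENNReal.ofReal (gumbelCDFReal v t) ∂gumbelMeasure w = ENNReal.ofReal (w / (w + v)) := by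
  have hwv : 0 < w + v := by linarith
  have hdensity : ∀ t, gumbelPDFReal w t * gumbelCDFReal v t =
      w / (w + v) * gumbelPDFReal (w + v) t := fun t => by
    simp only [gumbelPDFReal, mul_assoc, gumbelCDFReal_mul_gumbelCDFReal]
    field_simp
  have hmass := (isProbabilityMeasure_gumbelMeasure hwv).measure_univ
  rw [gumbelMeasure, withDensity_apply _ MeasurableSet.univ, Measure.restrict_univ] at hmass
  rw [gumbelMeasure, lintegral_withDensity_eq_lintegral_mul₀ (by fun_prop) (by fun_prop)]
  simp_rw [Pi.mul_apply, ← ENNReal.ofReal_mul (gumbelPDFReal_nonneg hw.le _), hdensity,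
    ENNReal.ofReal_mul (div_nonneg hw.le hwv.le)]
  rw [lintegral_const_mul _ (by fun_prop), hmass, mul_one]

lemma pi_gumbelMeasure_univ_pi_Iio {ι : Type*} [Fintype ι] {w : ι → ℝ} (hw : ∀ i, 0 < w i)
    (t : ℝ) : Measure.pi (fun i => gumbelMeasure (w i)) (univ.pi fun _ => Iio t) =
      ENNReal.ofReal (gumbelCDFReal (∑ i, w i) t) := by
  have _ i := isProbabilityMeasure_gumbelMeasure (hw i)
  rw [Measure.pi_pi, ← prod_gumbelCDFReal,
    ENNReal.ofReal_prod_of_nonneg fun i _ => gumbelCDFReal_nonneg (w i) t]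
  exact Finset.prod_congr rfl fun i _ => gumbelMeasure_Iio (hw i) t

theorem pi_gumbelMeasure_forall_ne_lt {n : ℕ} {w : Fin (n + 1) → ℝ} (hw : ∀ i, 0 < w i)
    (j : Fin (n + 1)) :
    Measure.pi (fun i => gumbelMeasure (w i)) {k | ∀ i ≠ j, k i < k j} =
      ENNReal.ofReal (w j / ∑ i, w i) := by
  have _ i := isProbabilityMeasure_gumbelMeasure (hw i)
  set S : Set (ℝ × (Fin n → ℝ)) := {p | ∀ k, p.2 k < p.1}
  have hS : MeasurableSet S := by measurability
  have hpre : {k : Fin (n + 1) → ℝ | ∀ i ≠ j, k i < k j} =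
      MeasurableEquiv.piFinSuccAbove (fun _ => ℝ) j ⁻¹' S := by
    ext k
    simp [S, Fin.forall_iff_succAbove j, Fin.removeNth]
  have hslice : ∀ t, Prod.mk t ⁻¹' S = univ.pi fun _ => Iio t := fun t => by
    ext
    simp [S]
  rw [hpre, (measurePreserving_piFinSuccAbove _ j).measure_preimage hS.nullMeasurableSet,
    Measure.prod_apply hS]
  simp_rw [hslice, pi_gumbelMeasure_univ_pi_Iio fun k => hw (j.succAbove k)]
  rw [lintegral_gumbelCDFReal (hw j) (Finset.sum_nonneg fun k _ => (hw _).le),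
    ← Fin.sum_univ_succAbove]

end ProbabilityTheory

theorem gumbel_max_trick_general (n : ℕ) {Ω : Type*} [MeasureSpace Ω]
    (x : Fin n → ℝ) (Gb : Fin n → Ω → ℝ)
    (hmeas : ∀ i, Measurable (Gb i))
    (hindep : iIndepFun Gb ℙ)
    (hcdf : ∀ i t, ℙ {ω | Gb i ω ≤ t} = ENNReal.ofReal (Real.exp (-Real.exp (-t))))
    (j : Fin n) :
    ℙ {ω | ∀ i, i ≠ j → x i + Gb i ω < x j + Gb j ω} =
      ENNReal.ofReal (Real.exp (x j) / ∑ i, Real.exp (x i)) := by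
  obtain ⟨m, rfl⟩ := Nat.exists_eq_add_one.mpr j.pos
  have hlaw : ∀ i, Measure.map ((x i + ·) ∘ Gb i) ℙ = gumbelMeasure (exp (x i)) := fun i => by
    have hG : Measure.map (Gb i) ℙ = gumbelMeasure 1 :=
      map_eq_gumbelMeasure (hmeas i) one_pos (by simpa [gumbelCDFReal] using hcdf i)
    rw [← Measure.map_map (measurable_const_add _) (hmeas i), hG,
      map_const_add_gumbelMeasure one_pos, mul_one]
  have hjoint : Measure.map (fun ω i => x i + Gb i ω) ℙ =
      Measure.pi fun i => gumbelMeasure (exp (x i)) := by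
    rw [(hindep.comp (fun i => (x i + ·)) fun i => measurable_const_add _).map_fun_eq_pi_map
      fun i => ((hmeas i).const_add _).aemeasurable]
    exact congrArg Measure.pi (funext hlaw)
  have hevent : MeasurableSet {k : Fin (m + 1) → ℝ | ∀ i ≠ j, k i < k j} := by measurability
  rw [← pi_gumbelMeasure_forall_ne_lt (fun i => exp_pos (x i)), ← hjoint,
    Measure.map_apply (measurable_pi_lambda _ fun i => (hmeas i).const_add _) hevent]
  rfl

theorem gumbel_max_trick (n : ℕ) (hn : 1 ≤ n) {Ω : Type*} [MeasureSpace Ω]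
    [IsProbabilityMeasure (ℙ : Measure Ω)]
    (x : Fin n → ℝ) (Gb : Fin n → Ω → ℝ)
    (hmeas : ∀ i, Measurable (Gb i))
    (hindep : iIndepFun Gb ℙ)
    (hcdf : ∀ i t, ℙ {ω | Gb i ω ≤ t} = ENNReal.ofReal (Real.exp (-Real.exp (-t))))
    (j : Fin n) :
    ℙ {ω | ∀ i, i ≠ j → x i + Gb i ω < x j + Gb j ω} =
      ENNReal.ofReal (Real.exp (x j) / ∑ i, Real.exp (x i)) :=
  gumbel_max_trick_general n x Gb hmeas hindep hcdf j
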